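/- Let Σ > 0 and Φ the standard normal CDF with density Φ'. For every a, b ≥ 0, one has x(1 − Φ(x)) ≤ Φ'(x) for x = (a + b)/Σ; consequently ∫∫ [−(δ(σ_a)+δ(σ_b))(1 − Φ((δ(σ_a)+δ(σ_b))/Σ_ρ)) + Σ_ρ Φ'((δ(σ_a)+δ(σ_b))/Σ_ρ)] dσ_a dσ_b > 0 for any nonnegative bounded measurable δ on [σ₋, σ₊], where Σ_ρ = √(σ_a² + σ_b² − 2ρσ_aσ_b) and ρ ∈ (−1, 1) with Σ_ρ > 0 on the domain. -/

import Mathlib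

open Real MeasureTheory

noncomputable def stdPhi (x : ℝ) : ℝ := ∫ t in Set.Iic x, Real.exp (-t^2/2) / Real.sqrt (2*Real.pi)

noncomputable def stdPhi' (x : ℝ) : ℝ := Real.exp (-x^2/2) / Real.sqrt (2*Real.pi)

/-!
Since `Φ''(t) = -t Φ'(t)`, the gap `Φ'(z) - z (1 - Φ(z))` equals `∫_{t > z} (t - z) Φ'(t) dt`,
which is positive for every real `z`. With `z = (δ σa + δ σb) / Σρ` the integrand is
`Σρ (Φ'(z) - z (1 - Φ(z)))`, so it is positive where `Σρ > 0`; for `δ ≥ 0` it is also at most `Σρ`,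
which is bounded on the compact square. A bounded positive function has positive iterated
integral over a square of positive measure.
-/

open Set Filter Topology ProbabilityTheory Function

section PositiveIntegrals

variable {α β : Type*} [MeasurableSpace α] [MeasurableSpace β] {μ : Measure α} {ν : Measure β}

lemma integral_pos_of_ae_pos [NeZero μ] {f : α → ℝ} (hfi : Integrable f μ)
    (hf : ∀ᵐ x ∂μ, 0 < f x) : 0 < ∫ x, f x ∂μ := by
  refine (integral_pos_iff_support_of_nonneg_ae (hf.mono fun _ hx => hx.le) hfi).2 ?_
  have hsupp : support f =ᵐ[μ] (univ : Set α) :=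
    ae_eq_univ.2 (ae_iff.1 (hf.mono fun _ hx => hx.ne'))
  rw [measure_congr hsupp]
  exact Measure.measure_univ_pos.2 (NeZero.ne μ)

lemma integral_pos_of_ae_pos_of_ae_le [IsFiniteMeasure μ] [NeZero μ] {f : α → ℝ} {C : ℝ}
    (hf : AEStronglyMeasurable f μ) (hpos : ∀ᵐ x ∂μ, 0 < f x) (hle : ∀ᵐ x ∂μ, f x ≤ C) :
    0 < ∫ x, f x ∂μ :=
  integral_pos_of_ae_pos (.of_bound hf C (by
    filter_upwards [hpos, hle] with x h0 h1
    rwa [Real.norm_of_nonneg h0.le])) hpos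

lemma integral_integral_pos [IsFiniteMeasure μ] [NeZero μ] [IsFiniteMeasure ν] [NeZero ν]
    {f : α → β → ℝ} {C : ℝ} (hf : Measurable (uncurry f))
    (hpos : ∀ᵐ a ∂μ, ∀ᵐ b ∂ν, 0 < f a b) (hle : ∀ᵐ a ∂μ, ∀ᵐ b ∂ν, f a b ≤ C) :
    0 < ∫ a, ∫ b, f a b ∂ν ∂μ := by
  have hinner : ∀ a, AEStronglyMeasurable (f a) ν := fun a =>
    (hf.comp measurable_prodMk_left).aestronglyMeasurable
  refine integral_pos_of_ae_pos_of_ae_le (C := C * ν.real univ)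
    (hf.stronglyMeasurable.integral_prod_right').aestronglyMeasurable ?_ ?_
  · filter_upwards [hpos, hle] with a h0 h1
    exact integral_pos_of_ae_pos_of_ae_le (hinner a) h0 h1
  · filter_upwards [hpos, hle] with a h0 h1
    refine (le_norm_self _).trans (norm_integral_le_of_norm_le_const ?_)
    filter_upwards [h0, h1] with b hb0 hb1
    rwa [Real.norm_of_nonneg hb0.le]

end PositiveIntegrals

section StandardNormal

lemma stdPhi'_eq_gaussianPDFReal : stdPhi' = gaussianPDFReal 0 1 := by
  ext x
  simp [stdPhi', gaussianPDFReal, div_eq_inv_mul]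

lemma stdPhi'_pos (x : ℝ) : 0 < stdPhi' x := by
  rw [stdPhi'_eq_gaussianPDFReal]
  exact gaussianPDFReal_pos _ _ _ one_ne_zero

lemma stdPhi'_le_one (x : ℝ) : stdPhi' x ≤ 1 := by
  rw [stdPhi', div_le_one (by positivity)]
  calc exp (-x ^ 2 / 2) ≤ 1 := exp_le_one_iff.2 (by nlinarith [sq_nonneg x])
    _ ≤ √(2 * π) := one_le_sqrt.2 (by linarith [pi_gt_three])

@[fun_prop]
lemma continuous_stdPhi' : Continuous stdPhi' := by
  unfold stdPhi'
  fun_prop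

lemma integrable_stdPhi' : Integrable stdPhi' :=
  stdPhi'_eq_gaussianPDFReal ▸ integrable_gaussianPDFReal 0 1

lemma integral_stdPhi' : ∫ x, stdPhi' x = 1 :=
  stdPhi'_eq_gaussianPDFReal ▸ integral_gaussianPDFReal_eq_one 0 one_ne_zero

lemma integrable_mul_stdPhi' : Integrable fun x => x * stdPhi' x := by
  refine ((integrable_mul_exp_neg_mul_sq (b := 1 / 2) (by norm_num)).div_const √(2 * π)).congr
    (.of_forall fun x => ?_)
  simp only [stdPhi']
  ring_nf

lemma hasDerivAt_stdPhi' (x : ℝ) : HasDerivAt stdPhi' (-x * stdPhi' x) x := by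
  have hexponent : HasDerivAt (fun t : ℝ => -t ^ 2 / 2) (-x) x :=
    ((hasDerivAt_pow 2 x).neg.div_const 2).congr_deriv (by push_cast; ring)
  exact (hexponent.exp.div_const _).congr_deriv (by simp only [stdPhi']; ring)

lemma tendsto_stdPhi'_atTop : Tendsto stdPhi' atTop (𝓝 0) := by
  have hexp : Tendsto (fun x : ℝ => exp (-x ^ 2 / 2)) atTop (𝓝 0) :=
    tendsto_exp_atBot.comp <| tendsto_neg_atTop_atBot.comp
      ((tendsto_pow_atTop two_ne_zero).atTop_div_const two_pos) |>.congr fun x => by simp [neg_div]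
  rw [← zero_div √(2 * π)]
  exact hexp.div_const _

lemma stdPhi_eq_setIntegral (x : ℝ) : stdPhi x = ∫ t in Iic x, stdPhi' t := rfl

lemma monotone_stdPhi : Monotone stdPhi := fun _ _ hxy =>
  setIntegral_mono_set integrable_stdPhi'.integrableOn (.of_forall fun t => (stdPhi'_pos t).le)
    (Iic_subset_Iic.2 hxy).eventuallyLE

@[fun_prop]
lemma measurable_stdPhi : Measurable stdPhi := monotone_stdPhi.measurable

lemma one_sub_stdPhi (x : ℝ) : 1 - stdPhi x = ∫ t in Ioi x, stdPhi' t := by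
  rw [← integral_stdPhi', ← intervalIntegral.integral_Iic_add_Ioi integrable_stdPhi'.integrableOn
    integrable_stdPhi'.integrableOn, stdPhi_eq_setIntegral, add_sub_cancel_left]

lemma stdPhi_le_one (x : ℝ) : stdPhi x ≤ 1 :=
  sub_nonneg.1 <| one_sub_stdPhi x ▸
    setIntegral_nonneg measurableSet_Ioi fun t _ => (stdPhi'_pos t).le

lemma setIntegral_Ioi_mul_stdPhi' (z : ℝ) : ∫ t in Ioi z, t * stdPhi' t = stdPhi' z := by
  have := integral_Ioi_of_hasDerivAt_of_tendsto' (f := -stdPhi') (a := z) (m := 0)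
    (fun t _ => by simpa using (hasDerivAt_stdPhi' t).neg) integrable_mul_stdPhi'.integrableOn
    (by rw [← neg_zero]; exact tendsto_stdPhi'_atTop.neg)
  simpa using this

lemma mul_one_sub_stdPhi_lt_stdPhi' (z : ℝ) : z * (1 - stdPhi z) < stdPhi' z := by
  have hgap : stdPhi' z - z * (1 - stdPhi z) = ∫ t in Ioi z, (t - z) * stdPhi' t := by
    rw [one_sub_stdPhi, ← integral_const_mul, ← setIntegral_Ioi_mul_stdPhi', ← integral_sub
      integrable_mul_stdPhi'.integrableOn (integrable_stdPhi'.const_mul z).integrableOn]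
    simp only [sub_mul]
  have hpos : 0 < ∫ t in Ioi z, (t - z) * stdPhi' t := by
    have : NeZero (volume (Ioi z)) := ⟨by simp⟩
    have hint : IntegrableOn (fun t => (t - z) * stdPhi' t) (Ioi z) := by
      simpa only [sub_mul, Pi.sub_def] using (integrable_mul_stdPhi'.sub
        (integrable_stdPhi'.const_mul z)).integrableOn
    refine integral_pos_of_ae_pos hint ?_
    filter_upwards [ae_restrict_mem measurableSet_Ioi] with t ht
    exact mul_pos (sub_pos.2 ht) (stdPhi'_pos t)
  linarith

end StandardNormal

lemma neg_mul_one_sub_stdPhi_add_mul_stdPhi'_pos (c : ℝ) {s : ℝ} (hs : 0 < s) :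
    0 < -c * (1 - stdPhi (c / s)) + s * stdPhi' (c / s) := by
  have h := mul_lt_mul_of_pos_left (mul_one_sub_stdPhi_lt_stdPhi' (c / s)) hs
  rw [← mul_assoc, mul_div_cancel₀ c hs.ne'] at h
  linarith

lemma neg_mul_one_sub_stdPhi_add_mul_stdPhi'_le {c s : ℝ} (hc : 0 ≤ c) (hs : 0 ≤ s) :
    -c * (1 - stdPhi (c / s)) + s * stdPhi' (c / s) ≤ s := by
  have hΦ := sub_nonneg.2 (stdPhi_le_one (c / s))
  nlinarith [mul_le_of_le_one_right hs (stdPhi'_le_one (c / s))]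

theorem half_linear_no_NE_integral_general (S : ℝ)
    (σm σp ρ : ℝ) (h1 : σm < σp)
    (hSρ : ∀ σa ∈ Set.Icc σm σp, ∀ σb ∈ Set.Icc σm σp,
      0 < Real.sqrt (σa^2 + σb^2 - 2*ρ*σa*σb))
    (δ : ℝ → ℝ) (hδmeas : Measurable δ) (hδnonneg : ∀ s : ℝ, 0 ≤ δ s) :
    (∀ a b : ℝ, 0 ≤ a → 0 ≤ b →
      ((a + b)/S) * (1 - stdPhi ((a + b)/S)) ≤ stdPhi' ((a + b)/S)) ∧
    0 < ∫ σa in Set.Icc σm σp, ∫ σb in Set.Icc σm σp,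
      (-(δ σa + δ σb) * (1 - stdPhi ((δ σa + δ σb) / Real.sqrt (σa^2 + σb^2 - 2*ρ*σa*σb)))
        + Real.sqrt (σa^2 + σb^2 - 2*ρ*σa*σb) *
          stdPhi' ((δ σa + δ σb) / Real.sqrt (σa^2 + σb^2 - 2*ρ*σa*σb))) := by
  refine ⟨fun a b _ _ => (mul_one_sub_stdPhi_lt_stdPhi' _).le, ?_⟩
  obtain ⟨B, hB⟩ := (isCompact_Icc.prod isCompact_Icc).exists_bound_of_continuousOn
    (f := fun p : ℝ × ℝ => √(p.1 ^ 2 + p.2 ^ 2 - 2 * ρ * p.1 * p.2)) (by fun_prop)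
  have : NeZero (volume (Icc σm σp)) := ⟨by simp [h1]⟩
  refine integral_integral_pos (C := B) (by fun_prop) ?_ ?_
  · filter_upwards [ae_restrict_mem measurableSet_Icc] with a ha
    filter_upwards [ae_restrict_mem measurableSet_Icc] with b hb
    exact neg_mul_one_sub_stdPhi_add_mul_stdPhi'_pos _ (hSρ a ha b hb)
  · filter_upwards [ae_restrict_mem measurableSet_Icc] with a ha
    filter_upwards [ae_restrict_mem measurableSet_Icc] with b hb
    exact (neg_mul_one_sub_stdPhi_add_mul_stdPhi'_le (add_nonneg (hδnonneg a) (hδnonneg b))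
      (sqrt_nonneg _)).trans ((le_norm_self _).trans (hB (a, b) ⟨ha, hb⟩))

/-- Mills-ratio bound at `(a+b)/S` for `a, b ≥ 0`, and strict positivity of the
double integral appearing in the half-linear no-NE proof. -/
theorem half_linear_no_NE_integral (S : ℝ) (hS : 0 < S)
    (σm σp ρ : ℝ) (h0 : 0 < σm) (h1 : σm < σp) (hρ : ρ ∈ Set.Ioo (-1 : ℝ) 1)
    (hSρ : ∀ σa ∈ Set.Icc σm σp, ∀ σb ∈ Set.Icc σm σp,
      0 < Real.sqrt (σa^2 + σb^2 - 2*ρ*σa*σb))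
    (δ : ℝ → ℝ) (hδmeas : Measurable δ) (hδnonneg : ∀ s : ℝ, 0 ≤ δ s)
    (hδbdd : ∃ M : ℝ, ∀ s : ℝ, |δ s| ≤ M) :
    (∀ a b : ℝ, 0 ≤ a → 0 ≤ b →
      ((a + b)/S) * (1 - stdPhi ((a + b)/S)) ≤ stdPhi' ((a + b)/S)) ∧
    0 < ∫ σa in Set.Icc σm σp, ∫ σb in Set.Icc σm σp,
      (-(δ σa + δ σb) * (1 - stdPhi ((δ σa + δ σb) / Real.sqrt (σa^2 + σb^2 - 2*ρ*σa*σb)))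
        + Real.sqrt (σa^2 + σb^2 - 2*ρ*σa*σb) *
          stdPhi' ((δ σa + δ σb) / Real.sqrt (σa^2 + σb^2 - 2*ρ*σa*σb))) :=
  half_linear_no_NE_integral_general S σm σp ρ h1 hSρ δ hδmeas hδnonneg
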